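/- The von Neumann entropy satisfies generalized additivity: for every orthonormal basis {w_j}_{j∈Fin m} of ℂ^m, all probability weights p_j (p_j ≥ 0, ∑_j p_j = 1) and all density matrices ρ_j on ℂ^n, S(∑_j p_j (w_j w_jᴴ) ⊗ ρ_j) = ∑_j (−p_j log p_j) + ∑_j p_j S(ρ_j), with the convention 0 log 0 = 0 and ⊗ the Kronecker product. -/

import Mathlib

open scoped Kronecker
open Finset Matrix
open scoped ComplexOrder

noncomputable section

/-- A density matrix: positive semidefinite with unit trace. -/
def IsDensity {d : Type} [Fintype d] [DecidableEq d] (ρ : Matrix d d ℂ) : Prop :=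
  ρ.PosSemidef ∧ ρ.trace = 1

/-- An entropy family: a real number assigned to every square complex matrix of
every finite dimension. -/
def EntropyFamily : Type 1 :=
  ∀ (d : Type) [Fintype d] [DecidableEq d], Matrix d d ℂ → ℝ

/-- Concavity of an entropy family. -/
def EntropyFamily.Concave (S : EntropyFamily) : Prop :=
  ∀ (d : Type) [Fintype d] [DecidableEq d] (k : ℕ) (p : Fin k → ℝ)
    (ρ : Fin k → Matrix d d ℂ),
    (∀ j, 0 ≤ p j) → ∑ j, p j = 1 → (∀ j, IsDensity (ρ j)) →
    ∑ j, p j * S d (ρ j) ≤ S d (∑ j, (p j : ℂ) • ρ j)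

/-- The entropy family depends only on the nonzero spectrum: `S (A Aᴴ) = S (Aᴴ A)`. -/
def EntropyFamily.SpectrumDep (S : EntropyFamily) : Prop :=
  ∀ (d e : Type) [Fintype d] [DecidableEq d] [Fintype e] [DecidableEq e]
    (A : Matrix d e ℂ), S d (A * Aᴴ) = S e (Aᴴ * A)

/-- Partial trace over the first tensor factor. -/
def trA {da db : Type} [Fintype da] (ρ : Matrix (da × db) (da × db) ℂ) :
    Matrix db db ℂ :=
  Matrix.of fun j j' => ∑ i, ρ (i, j) (i, j')

/-- Partial trace over the second tensor factor. -/
def trB {da db : Type} [Fintype db] (ρ : Matrix (da × db) (da × db) ℂ) :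
    Matrix da da ℂ :=
  Matrix.of fun i i' => ∑ j, ρ (i, j) (i', j)

/-- A POVM: a finite family of positive semidefinite matrices summing to `1`. -/
def IsPOVM {d : Type} [Fintype d] [DecidableEq d] {k : ℕ}
    (P : Fin k → Matrix d d ℂ) : Prop :=
  (∀ j, (P j).PosSemidef) ∧ ∑ j, P j = 1

/-- Probability of POVM outcome `P` on the first factor: `Tr((P ⊗ I) ρ)`. -/
def prob {da db : Type} [Fintype da] [Fintype db] [DecidableEq da] [DecidableEq db]
    (P : Matrix da da ℂ) (ρ : Matrix (da × db) (da × db) ℂ) : ℝ :=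
  (((P ⊗ₖ (1 : Matrix db db ℂ)) * ρ).trace).re

/-- Conditional state on the second factor given POVM outcome `P`. -/
def condB {da db : Type} [Fintype da] [Fintype db] [DecidableEq da] [DecidableEq db]
    (P : Matrix da da ℂ) (ρ : Matrix (da × db) (da × db) ℂ) : Matrix db db ℂ :=
  (((prob P ρ)⁻¹ : ℝ) : ℂ) • trA ((P ⊗ₖ (1 : Matrix db db ℂ)) * ρ)

/-- The Holevo quantity `χ(P, b)`. -/
def holevoB (S : EntropyFamily) {da db : Type} [Fintype da] [DecidableEq da]
    [Fintype db] [DecidableEq db] {k : ℕ} (P : Fin k → Matrix da da ℂ)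
    (ρ : Matrix (da × db) (da × db) ℂ) : ℝ :=
  S db (trA ρ) -
    ∑ j ∈ univ.filter (fun j => prob (P j) ρ ≠ 0),
      prob (P j) ρ * S db (condB (P j) ρ)

/-- Eigenvalues of a Hermitian matrix (junk value `0` if not Hermitian). -/
def eigs {d : Type} [Fintype d] [DecidableEq d] (X : Matrix d d ℂ) : d → ℝ :=
  if h : X.IsHermitian then h.eigenvalues else 0

/-- von Neumann entropy `S(ρ) = ∑ᵢ (−λᵢ log λᵢ)`. -/
def vN {d : Type} [Fintype d] [DecidableEq d] (ρ : Matrix d d ℂ) : ℝ :=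
  ∑ i, Real.negMulLog (eigs ρ i)

/-- von Neumann entropy as an entropy family. -/
def vNF : EntropyFamily := fun d _ _ ρ => vN ρ

/-- Quadratic entropy `S_Q(ρ) = 1 − Re Tr(ρ²)`. -/
def SQ {d : Type} [Fintype d] (ρ : Matrix d d ℂ) : ℝ := 1 - ((ρ * ρ).trace).re

/-- Quadratic entropy as an entropy family. -/
def SQF : EntropyFamily := fun d _ _ ρ => SQ ρ

/-- The outer product `ψ ψᴴ`. -/
def outer {d : Type} (ψ : d → ℂ) : Matrix d d ℂ := Matrix.vecMulVec ψ (star ψ)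

/-- A unit vector. -/
def UnitVec {d : Type} [Fintype d] (ψ : d → ℂ) : Prop := ∑ i, ‖ψ i‖ ^ 2 = 1

/-- Kraus operators of a quantum channel: `∑ᵢ Kᵢᴴ Kᵢ = 1`. -/
def IsKraus {n r t : ℕ} (K : Fin t → Matrix (Fin r) (Fin n) ℂ) : Prop :=
  ∑ i, (K i)ᴴ * K i = 1

/-- Action of the quantum channel with Kraus operators `K`. -/
def channel {n r t : ℕ} (K : Fin t → Matrix (Fin r) (Fin n) ℂ)
    (ρ : Matrix (Fin n) (Fin n) ℂ) : Matrix (Fin r) (Fin r) ℂ :=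
  ∑ i, K i * ρ * (K i)ᴴ

/-- Conditional joint state after a POVM element with square root `Q` and
outcome probability `p`: `(1/p) (Q ⊗ I) ρ (Q ⊗ I)`. -/
def condJoint {da db : Type} [Fintype da] [Fintype db] [DecidableEq da]
    [DecidableEq db] (Q : Matrix da da ℂ) (p : ℝ)
    (ρ : Matrix (da × db) (da × db) ℂ) : Matrix (da × db) (da × db) ℂ :=
  ((p⁻¹ : ℝ) : ℂ) • ((Q ⊗ₖ (1 : Matrix db db ℂ)) * ρ * (Q ⊗ₖ (1 : Matrix db db ℂ)))

/-- Tsallis entropy with parameter `q`. -/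
def tsallis (q : ℝ) {d : Type} [Fintype d] [DecidableEq d]
    (ρ : Matrix d d ℂ) : ℝ :=
  ((∑ i, eigs ρ i ^ q) - 1) / (1 - q)

/-- Rényi entropy with parameter `q`. -/
def renyi (q : ℝ) {d : Type} [Fintype d] [DecidableEq d]
    (ρ : Matrix d d ℂ) : ℝ :=
  (1 / (1 - q)) * Real.log (∑ i, eigs ρ i ^ q)

open Polynomial in
lemma my_charpoly_conj {d : Type} [Fintype d] [DecidableEq d]
    (U A : Matrix d d ℂ) (h : U * Uᴴ = 1) :
    (U * A * Uᴴ).charpoly = A.charpoly := by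
  have h' : Uᴴ * U = 1 := mul_eq_one_comm.mp h
  set f : Matrix d d ℂ →+* Matrix d d ℂ[X] := (Polynomial.C : ℂ →+* ℂ[X]).mapMatrix with hf
  have hUV : f U * f Uᴴ = 1 := by rw [← _root_.map_mul f, h, _root_.map_one f]
  have hVU : f Uᴴ * f U = 1 := by rw [← _root_.map_mul f, h', _root_.map_one f]
  have hcm : charmatrix (U * A * Uᴴ) = f U * charmatrix A * f Uᴴ := by
    unfold charmatrix
    rw [mul_sub, sub_mul]
    congr 1
    · have hc : Commute (Matrix.scalar d (X : ℂ[X])) (f Uᴴ) :=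
        Matrix.scalar_commute _ (fun r' => Commute.all _ _) _
      rw [mul_assoc, hc.eq, ← mul_assoc, hUV, one_mul]
    · rw [_root_.map_mul f, _root_.map_mul f]
  rw [Matrix.charpoly, Matrix.charpoly, hcm, det_mul, det_mul, mul_comm, ← mul_assoc, ← det_mul,
    hVU, det_one, one_mul]

open Polynomial in
lemma my_charpoly_diagonal {d : Type} [Fintype d] [DecidableEq d] (g : d → ℂ) :
    (Matrix.diagonal g).charpoly = ∏ i, (X - Polynomial.C (g i)) := by
  have : charmatrix (Matrix.diagonal g) =
      Matrix.diagonal (fun i => (X : ℂ[X]) - Polynomial.C (g i)) := by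
    ext i j
    by_cases hij : i = j
    · subst hij; simp [charmatrix_apply]
    · simp [charmatrix_apply_ne _ _ _ hij, Matrix.diagonal_apply_ne _ hij]
  rw [Matrix.charpoly, this, det_diagonal]

open Polynomial in
lemma my_charpoly_isHermitian {d : Type} [Fintype d] [DecidableEq d]
    {A : Matrix d d ℂ} (hA : A.IsHermitian) :
    A.charpoly = ∏ i, (X - Polynomial.C ((hA.eigenvalues i : ℝ) : ℂ)) := by
  have hU : (hA.eigenvectorUnitary : Matrix d d ℂ) * (hA.eigenvectorUnitary : Matrix d d ℂ)ᴴ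
      = 1 := by
    rw [← Matrix.star_eq_conjTranspose]
    exact Matrix.mem_unitaryGroup_iff.mp (hA.eigenvectorUnitary).2
  conv_lhs => rw [hA.spectral_theorem, Unitary.conjStarAlgAut_apply,
    Matrix.star_eq_conjTranspose]
  rw [my_charpoly_conj _ _ hU, my_charpoly_diagonal]
  simp [Function.comp]

open Polynomial in
lemma my_charmatrix_blockDiagonal {d o : Type} [Fintype d] [DecidableEq d] [Fintype o]
    [DecidableEq o] (B : o → Matrix d d ℂ) :
    charmatrix (Matrix.blockDiagonal B) = Matrix.blockDiagonal (fun j => charmatrix (B j)) := by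
  ext ⟨i, k⟩ ⟨j, k'⟩
  by_cases hk : k = k'
  · subst hk
    by_cases hij : i = j
    · subst hij; simp [charmatrix_apply, Matrix.blockDiagonal_apply]
    · simp [charmatrix_apply, Matrix.blockDiagonal_apply, Matrix.diagonal_apply, hij,
        Prod.ext_iff]
  · simp [charmatrix_apply, Matrix.blockDiagonal_apply, Matrix.diagonal_apply, hk, Prod.ext_iff]

open Polynomial in
lemma my_charpoly_blockDiagonal {d o : Type} [Fintype d] [DecidableEq d] [Fintype o]
    [DecidableEq o] (B : o → Matrix d d ℂ) :
    (Matrix.blockDiagonal B).charpoly = ∏ j, (B j).charpoly := by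
  rw [Matrix.charpoly, my_charmatrix_blockDiagonal, det_blockDiagonal]
  rfl

lemma my_kronecker_conjTranspose {da db : Type} [Fintype da] [Fintype db]
    (A : Matrix da da ℂ) (B : Matrix db db ℂ) :
    (A ⊗ₖ B)ᴴ = Aᴴ ⊗ₖ Bᴴ := by
  ext ⟨i, j⟩ ⟨k, l⟩
  simp [Matrix.conjTranspose_apply, Matrix.kroneckerMap_apply, mul_comm]

/-- the von Neumann entropy satisfies generalized additivity. -/
theorem vN_generalized_additivity
    (m n : ℕ) (w : Fin m → Fin m → ℂ)
    (hw : ∀ i i', ∑ x, star (w i x) * w i' x = if i = i' then 1 else 0)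
    (p : Fin m → ℝ) (ρ : Fin m → Matrix (Fin n) (Fin n) ℂ)
    (hp : ∀ j, 0 ≤ p j) (hps : ∑ j, p j = 1) (hρ : ∀ j, IsDensity (ρ j)) :
    vN (∑ j, (p j : ℂ) • (outer (w j) ⊗ₖ ρ j)) =
      ∑ j, Real.negMulLog (p j) + ∑ j, p j * vN (ρ j) := by
  classical
  set M : Matrix (Fin m × Fin n) (Fin m × Fin n) ℂ :=
    ∑ j, (p j : ℂ) • (outer (w j) ⊗ₖ ρ j) with hMdef
  set W : Matrix (Fin m) (Fin m) ℂ := Matrix.of (fun x j => w j x) with hWdef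
  set B : Fin m → Matrix (Fin n) (Fin n) ℂ := fun j => (p j : ℂ) • ρ j with hBdef
  set D : Matrix (Fin m × Fin n) (Fin m × Fin n) ℂ :=
    (Matrix.blockDiagonal B).submatrix Prod.swap Prod.swap with hDdef
  have hherm : ∀ j, (ρ j).IsHermitian := fun j => (hρ j).1.1
  set lam : Fin m → Fin n → ℝ := fun j => (hherm j).eigenvalues with hlamdef
  have hWW : Wᴴ * W = 1 := by
    ext i i'
    simpa [Matrix.mul_apply, Matrix.conjTranspose_apply, Matrix.one_apply, hWdef] using hw i i'
  have hWW' : W * Wᴴ = 1 := mul_eq_one_comm.mp hWW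
  have hKU : (W ⊗ₖ (1 : Matrix (Fin n) (Fin n) ℂ)) * (W ⊗ₖ (1 : Matrix (Fin n) (Fin n) ℂ))ᴴ
      = 1 := by
    rw [my_kronecker_conjTranspose, Matrix.conjTranspose_one, ← Matrix.mul_kronecker_mul, hWW',
      Matrix.one_mul, Matrix.one_kronecker_one]
  have hMD : M = (W ⊗ₖ (1 : Matrix (Fin n) (Fin n) ℂ)) * D *
      (W ⊗ₖ (1 : Matrix (Fin n) (Fin n) ℂ))ᴴ := by
    ext ⟨x, a⟩ ⟨y, b⟩
    simp only [hMdef, Matrix.sum_apply, Matrix.smul_apply, Matrix.kroneckerMap_apply,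
      Matrix.mul_apply, Matrix.conjTranspose_apply, Matrix.submatrix_apply, Prod.swap_prod_mk,
      Matrix.blockDiagonal_apply, Matrix.one_apply, Fintype.sum_prod_type, hBdef, hWdef, hDdef,
      Matrix.of_apply, outer, Matrix.vecMulVec_apply, smul_eq_mul, Pi.smul_apply, Pi.star_apply]
    simp only [mul_ite, mul_zero, ite_mul, zero_mul, apply_ite (star : ℂ → ℂ), star_one, star_zero,
      Finset.sum_ite_irrel, Finset.sum_const_zero, Finset.sum_ite_eq, Finset.sum_ite_eq',
      Finset.mem_univ, if_true]
    refine Finset.sum_congr rfl fun j _ => by ring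
  have hD : D.IsHermitian := by
    have hBH : ∀ j, (B j).IsHermitian := by
      intro j
      rw [Matrix.IsHermitian, hBdef, Matrix.conjTranspose_smul, (hherm j).eq]
      congr 1
      exact Complex.ext rfl (by simp)
    have : (Matrix.blockDiagonal B).IsHermitian := by
      rw [Matrix.IsHermitian, Matrix.blockDiagonal_conjTranspose]
      exact congrArg _ (funext fun j => (hBH j))
    exact this.submatrix _
  have hMherm : M.IsHermitian := by
    rw [hMD]; exact Matrix.isHermitian_mul_mul_conjTranspose _ hD
  -- characteristic polynomial of M
  have hBj : ∀ j, (B j).charpoly = ∏ i, (Polynomial.X - Polynomial.C ((p j * lam j i : ℝ) : ℂ)) := by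
    intro j
    have hU : ((hherm j).eigenvectorUnitary : Matrix (Fin n) (Fin n) ℂ) *
        ((hherm j).eigenvectorUnitary : Matrix (Fin n) (Fin n) ℂ)ᴴ = 1 := by
      rw [← Matrix.star_eq_conjTranspose]
      exact Matrix.mem_unitaryGroup_iff.mp ((hherm j).eigenvectorUnitary).2
    have hspec : B j = ((hherm j).eigenvectorUnitary : Matrix (Fin n) (Fin n) ℂ) *
        Matrix.diagonal (fun i => ((p j * lam j i : ℝ) : ℂ)) *
        ((hherm j).eigenvectorUnitary : Matrix (Fin n) (Fin n) ℂ)ᴴ := by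
      have h1 := (hherm j).spectral_theorem
      rw [Unitary.conjStarAlgAut_apply] at h1
      have h2 : Matrix.diagonal (fun i => ((p j * lam j i : ℝ) : ℂ)) =
          (p j : ℂ) • Matrix.diagonal (RCLike.ofReal ∘ (hherm j).eigenvalues) := by
        ext i k
        rcases eq_or_ne i k with rfl | hik
        · simp [hlamdef, Matrix.smul_apply, Complex.ofReal_mul]
        · simp [Matrix.diagonal_apply_ne _ hik, Matrix.smul_apply]
      rw [h2, mul_smul_comm, smul_mul_assoc, ← Matrix.star_eq_conjTranspose, ← h1, hBdef]
    rw [hspec, my_charpoly_conj _ _ hU, my_charpoly_diagonal]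
  have hcp : M.charpoly = ∏ x : Fin m × Fin n, (Polynomial.X - Polynomial.C ((p x.1 * lam x.1 x.2 : ℝ) : ℂ))
      := by
    have hDre : D = (Matrix.reindex (Equiv.prodComm (Fin n) (Fin m))
        (Equiv.prodComm (Fin n) (Fin m))) (Matrix.blockDiagonal B) := rfl
    rw [hMD, my_charpoly_conj _ _ hKU, hDre, Matrix.charpoly_reindex,
      my_charpoly_blockDiagonal, Fintype.prod_prod_type]
    exact Finset.prod_congr rfl fun j _ => hBj j
  have hMeig : M.charpoly = ∏ k : Fin m × Fin n,
      (Polynomial.X - Polynomial.C ((hMherm.eigenvalues k : ℝ) : ℂ)) := my_charpoly_isHermitian hMherm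
  -- multiset of eigenvalues
  have hreal : Multiset.map hMherm.eigenvalues Finset.univ.val =
      Multiset.map (fun x : Fin m × Fin n => p x.1 * lam x.1 x.2) Finset.univ.val := by
    have h1 : (∏ k : Fin m × Fin n,
          (Polynomial.X - Polynomial.C ((hMherm.eigenvalues k : ℝ) : ℂ))) =
        (∏ x : Fin m × Fin n, (Polynomial.X - Polynomial.C ((p x.1 * lam x.1 x.2 : ℝ) : ℂ))) :=
      hMeig.symm.trans hcp
    have e1 : ∀ (g : Fin m × Fin n → ℂ), (∏ k, (Polynomial.X - Polynomial.C (g k))) =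
        (Multiset.map (fun a => Polynomial.X - Polynomial.C a)
          (Multiset.map g Finset.univ.val)).prod := by
      intro g
      rw [Multiset.map_map, Finset.prod_eq_multiset_prod]
      rfl
    rw [e1, e1] at h1
    have h2 := congrArg Polynomial.roots h1
    rw [Polynomial.roots_multiset_prod_X_sub_C, Polynomial.roots_multiset_prod_X_sub_C] at h2
    apply Multiset.map_injective Complex.ofReal_injective
    simpa [Multiset.map_map, Function.comp] using h2
  -- trace facts
  have htr : ∀ j, ∑ i, lam j i = 1 := by
    intro j
    have hU1 : star ((hherm j).eigenvectorUnitary : Matrix (Fin n) (Fin n) ℂ) *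
        ((hherm j).eigenvectorUnitary : Matrix (Fin n) (Fin n) ℂ) = 1 :=
      mul_eq_one_comm.mp (Matrix.mem_unitaryGroup_iff.mp ((hherm j).eigenvectorUnitary).2)
    have h1 : (ρ j).trace = ∑ i, ((lam j i : ℝ) : ℂ) := by
      conv_lhs => rw [(hherm j).spectral_theorem, Unitary.conjStarAlgAut_apply]
      rw [Matrix.trace_mul_comm, ← Matrix.mul_assoc, hU1, Matrix.one_mul, Matrix.trace_diagonal]
      simp [hlamdef, Function.comp]
    have h2 := (hρ j).2
    rw [h1] at h2
    have h3 : ((∑ i, lam j i : ℝ) : ℂ) = ((1 : ℝ) : ℂ) := by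
      push_cast
      simpa using h2
    exact_mod_cast h3
  -- final computation
  have heigsM : eigs M = hMherm.eigenvalues := by
    simp only [eigs]
    rw [dif_pos hMherm]
  have heigsρ : ∀ j, eigs (ρ j) = lam j := by
    intro j
    simp only [eigs]
    rw [dif_pos (hherm j)]
  have hsum : vN M = ∑ x : Fin m × Fin n, Real.negMulLog (p x.1 * lam x.1 x.2) := by
    simp only [vN, heigsM]
    rw [Finset.sum_eq_multiset_sum, Finset.sum_eq_multiset_sum]
    rw [show (Finset.univ.val.map fun k => Real.negMulLog (hMherm.eigenvalues k)) =
      Multiset.map Real.negMulLog (Multiset.map hMherm.eigenvalues Finset.univ.val) by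
        rw [Multiset.map_map]; rfl]
    rw [hreal, Multiset.map_map]
    rfl
  rw [hsum, Fintype.sum_prod_type]
  have hj : ∀ j, ∑ i, Real.negMulLog (p j * lam j i) =
      Real.negMulLog (p j) + p j * vN (ρ j) := by
    intro j
    have h4 : ∀ i, Real.negMulLog (p j * lam j i) =
        lam j i * Real.negMulLog (p j) + p j * Real.negMulLog (lam j i) :=
      fun i => Real.negMulLog_mul _ _
    rw [Finset.sum_congr rfl fun i _ => h4 i, Finset.sum_add_distrib, ← Finset.sum_mul,
      htr j, one_mul, ← Finset.mul_sum]
    simp only [vN, heigsρ j]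
  rw [Finset.sum_congr rfl fun j _ => hj j, Finset.sum_add_distrib]
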